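/- Let K = 3, B¹ₓ = 0, B²ₓ = 1, and let 𝒞 be the collection of all eight constraints of the form −z₁ − z₂ − z₃ ≤ −7/4, where each z_k is either y_k or 1 − y_k. Then 𝒞 satisfies Condition 𝒜, and 𝒞 satisfies Condition ℬ with l = 2 and ν = 1/4: for every cube I = Π_{k=1}^3 [i_k/2, (i_k+1)/2] with i_k ∈ {0,1}, there is a constraint in 𝒞 whose left-hand side minus right-hand side is at least 1/4 at every point of I. -/

import Mathlib

noncomputable section

/-- Condition 𝒜 for a family of linear constraints `Σ_k A r k * y k ≤ bv r`, `r : ι`, on the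
box `[B1, B2]^K`: for every constraint, every coordinate `k`, and every `z ∈ [B1, B2]`, there
are `y₁,…,y_K ∈ [B1, B2]` with `y_k = z` satisfying the constraint. -/
def ConditionA {K : ℕ} {ι : Type*} (A : ι → Fin K → ℝ) (bv : ι → ℝ) (B1 B2 : ℝ) : Prop :=
  ∀ r : ι, ∀ k : Fin K, ∀ z ∈ Set.Icc B1 B2,
    ∃ y : Fin K → ℝ, (∀ k', y k' ∈ Set.Icc B1 B2) ∧ y k = z ∧
      ∑ k', A r k' * y k' ≤ bv r

/-- Condition ℬ with explicit parameters `l` and `ν`: for every `K`-dimensional cube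
`I = Π_k [t_k/l, (t_k+1)/l]` with `t_k` integer and `B1 ≤ t_k/l < B2`, some constraint
`r` satisfies `Σ_k A r k * y k − bv r ≥ ν` for every `y ∈ I`. -/
def ConditionBWith {K : ℕ} {ι : Type*} (A : ι → Fin K → ℝ) (bv : ι → ℝ) (B1 B2 : ℝ)
    (l : ℕ) (ν : ℝ) : Prop :=
  0 < l ∧ 0 < ν ∧
    ∀ t : Fin K → ℤ, (∀ k, B1 ≤ (t k : ℝ) / l ∧ (t k : ℝ) / l < B2) →
      ∃ r : ι, ∀ y : Fin K → ℝ,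
        (∀ k, y k ∈ Set.Icc ((t k : ℝ) / l) (((t k : ℝ) + 1) / l)) →
        ν ≤ ∑ k, A r k * y k - bv r

/-- The eight constraints `−z₁ − z₂ − z₃ ≤ −7/4`, where each `z_k` is either `y_k`
(when `σ k = true`) or `1 − y_k` (when `σ k = false`), written in the form
`Σ_k A σ k * y_k ≤ bv σ`: the coefficient of `y_k` is `−1` if `z_k = y_k` and `+1` if
`z_k = 1 − y_k`. -/
def exampleA : (Fin 3 → Bool) → Fin 3 → ℝ := fun σ k => if σ k then -1 else 1

/-- The right-hand sides of the eight constraints: `−7/4` plus the number of coordinates with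
`z_k = 1 − y_k`. -/
def exampleB : (Fin 3 → Bool) → ℝ := fun σ =>
  -(7 / 4) + ((Finset.univ.filter (fun k : Fin 3 => σ k = false)).card : ℝ)

/-!
In terms of the literals `z_k ∈ {y_k, 1 - y_k}`, the slack of a constraint is `7/4 - Σ_k z_k`.
For 𝒜, fix `y_k = z` and choose the other coordinates so that their literals equal `1`; then
`Σ_k z_k ≥ 2`. For ℬ, on a cube of side `1/2` take the constraint whose literals are `y_k` on
`[0, 1/2]` and `1 - y_k` on `[1/2, 1]`: every literal is at most `1/2`, so the slack is at least
`7/4 - 3/2 = 1/4`.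
-/

def literal (b : Bool) (x : ℝ) : ℝ := if b then x else 1 - x

lemma literal_literal (b : Bool) (x : ℝ) : literal b (literal b x) = x := by
  cases b <;> simp [literal]

lemma literal_mem_Icc {b : Bool} {x : ℝ} (hx : x ∈ Set.Icc (0 : ℝ) 1) :
    literal b x ∈ Set.Icc (0 : ℝ) 1 := by
  obtain ⟨h0, h1⟩ := hx
  cases b <;> constructor <;> simp only [literal] <;> norm_num <;> linarith

lemma exampleA_sum_sub_exampleB (σ : Fin 3 → Bool) (y : Fin 3 → ℝ) :
    ∑ k, exampleA σ k * y k - exampleB σ = 7 / 4 - ∑ k, literal (σ k) (y k) := by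
  have hcard : ∑ k, (exampleA σ k * y k + literal (σ k) (y k)) =
      ((Finset.univ.filter (fun k : Fin 3 => σ k = false)).card : ℝ) := by
    rw [Finset.card_filter, Nat.cast_sum]
    refine Finset.sum_congr rfl fun k _ => ?_
    cases h : σ k <;> simp [exampleA, literal, h]
  rw [Finset.sum_add_distrib] at hcard
  rw [exampleB, ← hcard]
  ring

lemma exampleA_conditionA : ConditionA exampleA exampleB 0 1 := by
  intro σ k z hz
  set y : Fin 3 → ℝ := Function.update (fun j => literal (σ j) 1) k z
  have hy : ∀ j, y j ∈ Set.Icc (0 : ℝ) 1 := by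
    intro j
    rcases eq_or_ne j k with rfl | hj
    · simpa [y] using hz
    · simpa [y, hj] using literal_mem_Icc (b := σ j) (x := 1) (by norm_num)
  refine ⟨y, hy, by simp [y], ?_⟩
  have hrest : ∑ j ∈ Finset.univ.erase k, literal (σ j) (y j) = 2 := by
    rw [Finset.sum_congr rfl fun j hj => by
      rw [show y j = literal (σ j) 1 by simp [y, Finset.ne_of_mem_erase hj], literal_literal]]
    simp [Finset.card_erase_of_mem]
  have hk_nonneg := (literal_mem_Icc (b := σ k) (hy k)).1
  have hsum := Finset.add_sum_erase Finset.univ (fun j => literal (σ j) (y j))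
    (Finset.mem_univ k)
  have hslack := exampleA_sum_sub_exampleB σ y
  linarith

lemma int_eq_zero_or_one_of_div_two_mem_Ico {t : ℤ} (h : (t : ℝ) / 2 ∈ Set.Ico (0 : ℝ) 1) :
    t = 0 ∨ t = 1 := by
  obtain ⟨h0, h1⟩ := h
  have : (0 : ℝ) ≤ t ∧ (t : ℝ) < 2 := ⟨by linarith, by linarith⟩
  have : 0 ≤ t ∧ t < 2 := by exact_mod_cast this
  omega

lemma literal_le_half_of_mem_half_cube {t : ℤ} (ht : t = 0 ∨ t = 1) {x : ℝ}
    (hx : x ∈ Set.Icc ((t : ℝ) / 2) (((t : ℝ) + 1) / 2)) :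
    literal (decide (t = 0)) x ≤ 1 / 2 := by
  obtain ⟨hl, hr⟩ := hx
  rcases ht with rfl | rfl <;> norm_num [literal] at hl hr ⊢ <;> linarith

lemma exampleA_conditionBWith : ConditionBWith exampleA exampleB 0 1 2 (1 / 4) := by
  refine ⟨two_pos, by norm_num, fun t ht => ⟨fun k => decide (t k = 0), fun y hy => ?_⟩⟩
  have ht01 : ∀ k, t k = 0 ∨ t k = 1 := fun k =>
    int_eq_zero_or_one_of_div_two_mem_Ico (by simpa using ht k)
  have hsum : ∑ k, literal (decide (t k = 0)) (y k) ≤ ∑ _k : Fin 3, (1 / 2 : ℝ) :=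
    Finset.sum_le_sum fun k _ =>
      literal_le_half_of_mem_half_cube (ht01 k) (by exact_mod_cast hy k)
  rw [exampleA_sum_sub_exampleB]
  norm_num at hsum ⊢
  linarith

/-- **The example family satisfies Condition 𝒜, and Condition ℬ with `l = 2`, `ν = 1/4`.** -/
theorem example_satisfies_conditions :
    ConditionA exampleA exampleB 0 1 ∧
    ConditionBWith exampleA exampleB 0 1 2 (1 / 4) :=
  ⟨exampleA_conditionA, exampleA_conditionBWith⟩
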